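/- arXiv:1606.09244 — 2 statements merged into one kernel-verified Lean document; each statement's English description precedes it below -/
import Mathlib

section
/- Let φ = (1+√5)/2, a = φ·√φ, b = √(a²-1). Let P = (√(2a²/(a²+1)), √((a²-1)b²/(a²+1))), N = (a, 0), K = (0, b), F₂ = (1, 0). Then the line PN is parallel to the line KF₂, i.e., the slope of PN equals the slope of KF₂ (which is -b). -/
set_option maxHeartbeats 1000000 in
theorem stmt_3 (φ a b : ℝ) (hφ : φ = (1 + Real.sqrt 5) / 2)
    (ha : a = φ * Real.sqrt φ) (hb : b = Real.sqrt (a ^ 2 - 1))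
    (P N K F₂ : ℝ × ℝ)
    (hP : P = (Real.sqrt (2 * a ^ 2 / (a ^ 2 + 1)),
               Real.sqrt ((a ^ 2 - 1) * b ^ 2 / (a ^ 2 + 1))))
    (hN : N = (a, 0)) (hK : K = (0, b)) (hF : F₂ = (1, 0)) :
    (P.2 - N.2) / (P.1 - N.1) = (K.2 - F₂.2) / (K.1 - F₂.1) ∧
    (K.2 - F₂.2) / (K.1 - F₂.1) = -b := by
  have s5 : Real.sqrt 5 ^ 2 = 5 := Real.sq_sqrt (by norm_num)
  have s5pos : (0:ℝ) < Real.sqrt 5 := Real.sqrt_pos.mpr (by norm_num)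
  have s5gt : (2:ℝ) < Real.sqrt 5 := by nlinarith
  have hφpos : 0 < φ := by rw [hφ]; linarith
  have hφgt : 1 < φ := by rw [hφ]; linarith
  have hsqφ : Real.sqrt φ ^ 2 = φ := Real.sq_sqrt hφpos.le
  have hsqφpos : 0 < Real.sqrt φ := Real.sqrt_pos.mpr hφpos
  have ha2 : a ^ 2 = φ ^ 2 * φ := by
    rw [ha]; linear_combination φ ^ 2 * hsqφ
  have ha2' : a ^ 2 = 2 + Real.sqrt 5 := by
    rw [ha2, hφ]; linear_combination (Real.sqrt 5 + 3) / 8 * s5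
  have hbval : b = Real.sqrt 2 * Real.sqrt φ := by
    rw [hb, show a ^ 2 - 1 = 2 * φ by rw [ha2', hφ]; ring,
      Real.sqrt_mul (by norm_num)]
  have hb2 : b ^ 2 = 2 * φ := by
    rw [hbval, mul_pow, hsqφ, Real.sq_sqrt (show (0:ℝ) ≤ 2 by norm_num)]
  have harg1 : 2 * a ^ 2 / (a ^ 2 + 1) = φ := by
    rw [ha2', hφ]
    rw [div_eq_iff (by positivity)]
    linear_combination (-1/2) * s5
  have harg2 : (a ^ 2 - 1) * b ^ 2 / (a ^ 2 + 1) = 2 := by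
    rw [ha2', hb2, hφ]
    rw [div_eq_iff (by positivity)]
    linear_combination s5
  have hP1 : P.1 = Real.sqrt φ := by rw [hP]; simp [harg1]
  have hP2 : P.2 = Real.sqrt 2 := by rw [hP]; simp [harg2]
  have hdenne : Real.sqrt φ - a ≠ 0 := by
    rw [ha]
    have h : Real.sqrt φ - φ * Real.sqrt φ = Real.sqrt φ * (1 - φ) := by ring
    rw [h]
    exact mul_ne_zero (ne_of_gt hsqφpos) (ne_of_lt (by linarith))
  have hφ2 : φ ^ 2 = φ + 1 := by rw [hφ]; linear_combination (1/4) * s5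
  constructor
  · rw [hP1, hP2, hN, hK, hF]
    simp only [sub_zero, zero_sub]
    rw [div_eq_div_iff hdenne (by norm_num)]
    rw [ha, hbval]
    linear_combination (Real.sqrt 2 * (φ - 1)) * hsqφ + Real.sqrt 2 * hφ2
  · rw [hK, hF]; simp only; ring
end

section
/- Suppose a > 1, b = √(a² - 1), and √((a²-1)b²/(a²+1)) = (a - √(2a²/(a²+1)))·b. Then a = φ·√φ where φ = (1+√5)/2. -/
set_option maxHeartbeats 2000000 in
theorem stmt_4 (a b : ℝ) (ha : 1 < a) (hb : b = Real.sqrt (a ^ 2 - 1))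
    (h : Real.sqrt ((a ^ 2 - 1) * b ^ 2 / (a ^ 2 + 1)) =
      (a - Real.sqrt (2 * a ^ 2 / (a ^ 2 + 1))) * b) :
    a = ((1 + Real.sqrt 5) / 2) * Real.sqrt ((1 + Real.sqrt 5) / 2) := by
  have ha0 : 0 < a := by linarith
  have he : 0 < a ^ 2 - 1 := by nlinarith
  have hb2 : b ^ 2 = a ^ 2 - 1 := by
    rw [hb, Real.sq_sqrt (by linarith)]
  have hbpos : 0 < b := by
    rw [hb]; exact Real.sqrt_pos.mpr he
  set p := Real.sqrt (a ^ 2 + 1) with hpdef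
  have hp2 : p ^ 2 = a ^ 2 + 1 := Real.sq_sqrt (by positivity)
  have hppos : 0 < p := Real.sqrt_pos.mpr (by positivity)
  set q := Real.sqrt (2 * a ^ 2 / (a ^ 2 + 1)) with hqdef
  have hq2 : q ^ 2 = 2 * a ^ 2 / (a ^ 2 + 1) := Real.sq_sqrt (by positivity)
  have hq0 : 0 ≤ q := Real.sqrt_nonneg _
  set r := Real.sqrt 2 with hrdef
  have hr2 : r ^ 2 = 2 := Real.sq_sqrt (by norm_num)
  have hrpos : 0 < r := Real.sqrt_pos.mpr (by norm_num)
  have hqp : q * p = a * r := by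
    have hsq : (q * p) ^ 2 = (a * r) ^ 2 := by
      rw [mul_pow, mul_pow, hq2, hp2, hr2]
      field_simp
    have h0 : (q * p - a * r) * (q * p + a * r) = 0 := by linear_combination hsq
    rcases mul_eq_zero.mp h0 with h1 | h1
    · linarith
    · nlinarith [mul_nonneg hq0 hppos.le, mul_pos ha0 hrpos]
  -- simplify LHS of h
  have hL : Real.sqrt ((a ^ 2 - 1) * b ^ 2 / (a ^ 2 + 1)) = (a ^ 2 - 1) / p := by
    have : (a ^ 2 - 1) * b ^ 2 / (a ^ 2 + 1) = ((a ^ 2 - 1) / p) ^ 2 := by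
      rw [div_pow, hp2, hb2]; ring
    rw [this, Real.sqrt_sq (by positivity)]
  rw [hL] at h
  have key : a ^ 2 - 1 + a * r * b = a * b * p := by
    have h' := congrArg (· * p) h
    simp only [div_mul_cancel₀ _ (ne_of_gt hppos)] at h'
    have h2 : (a - q) * b * p = a * b * p - a * r * b := by
      linear_combination (-b) * hqp
    linarith [h'.trans h2]
  have ksq : (a ^ 2 - 1 + a * r * b) ^ 2 = (a * b * p) ^ 2 := by rw [key]
  have k0 : (a ^ 2 - 1) * (2 * a * r * b - (a ^ 2 - 1) ^ 2) = 0 := by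
    linear_combination ksq - (a ^ 2 * b ^ 2) * hr2 + (a ^ 2 * b ^ 2) * hp2 +
      (a ^ 4 - a ^ 2) * hb2
  have k1 : 2 * a * r * b = (a ^ 2 - 1) ^ 2 := by
    rcases mul_eq_zero.mp k0 with h1 | h1
    · exact absurd h1 (ne_of_gt he)
    · linarith
  have k2 : (2 * a * r * b) ^ 2 = ((a ^ 2 - 1) ^ 2) ^ 2 := by rw [k1]
  have k3 : 8 * a ^ 2 = (a ^ 2 - 1) ^ 3 := by
    have h0 : (a ^ 2 - 1) * (8 * a ^ 2 - (a ^ 2 - 1) ^ 3) = 0 := by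
      linear_combination k2 - (4 * a ^ 2 * b ^ 2) * hr2 - (8 * a ^ 2) * hb2
    rcases mul_eq_zero.mp h0 with h1 | h1
    · exact absurd h1 (ne_of_gt he)
    · linarith
  -- (t+1)(t²-4t-1)=0 with t = a², t+1 > 0
  have k4 : a ^ 2 * a ^ 2 = 4 * a ^ 2 + 1 := by
    have h0 : (a ^ 2 + 1) * (a ^ 2 * a ^ 2 - 4 * a ^ 2 - 1) = 0 := by
      linear_combination -k3
    rcases mul_eq_zero.mp h0 with h1 | h1
    · nlinarith
    · linarith
  have h5 : Real.sqrt 5 ^ 2 = 5 := Real.sq_sqrt (by norm_num)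
  have h5pos : 0 < Real.sqrt 5 := Real.sqrt_pos.mpr (by norm_num)
  have ht2 : 2 < a ^ 2 := by
    by_contra h'
    push_neg at h'
    have hm : a ^ 2 * a ^ 2 ≤ 2 * a ^ 2 := mul_le_mul_of_nonneg_right h' (sq_nonneg a)
    linarith [k4, he]
  have ha2 : a ^ 2 = 2 + Real.sqrt 5 := by
    have hsq : (a ^ 2 - 2) ^ 2 = 5 := by linear_combination k4
    have h0 : (a ^ 2 - 2 - Real.sqrt 5) * (a ^ 2 - 2 + Real.sqrt 5) = 0 := by
      linear_combination hsq - h5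
    rcases mul_eq_zero.mp h0 with h1 | h1
    · linarith
    · linarith
  set φ := (1 + Real.sqrt 5) / 2 with hφdef
  have hφpos : 0 < φ := by positivity
  have hsφ : Real.sqrt φ ^ 2 = φ := Real.sq_sqrt hφpos.le
  have hRpos : 0 < φ * Real.sqrt φ := by
    have : 0 < Real.sqrt φ := Real.sqrt_pos.mpr hφpos
    positivity
  have hsq2 : a ^ 2 = (φ * Real.sqrt φ) ^ 2 := by
    have hcube : (φ * Real.sqrt φ) ^ 2 = φ ^ 2 * φ := by rw [mul_pow, hsφ]
    rw [hcube, ha2, hφdef]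
    linear_combination (-(Real.sqrt 5 + 3) / 8) * h5
  have h0 : (a - φ * Real.sqrt φ) * (a + φ * Real.sqrt φ) = 0 := by
    linear_combination hsq2
  rcases mul_eq_zero.mp h0 with h1 | h1
  · linarith
  · linarith
end
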